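/- Define, for x, y ∈ 3, the operation x ⊓ y = (x ∨_SAC (y ∧_SAC (x ∨_SAC ∼y))) ∧_SAC (y ∨_SAC (x ∧_SAC (y ∨_SAC ∼x))). Then x ⊓ y = 1 if and only if x = y = 1; x ⊓ y = ⊥ if and only if x = y = ⊥; and x ⊓ y = 0 in all other cases. -/
import Mathlib


/-- The three truth values `0`, `1`, `⊥`. -/
inductive Tri : Type
  | zero : Tri
  | one : Tri
  | bot : Tri
deriving DecidableEq

/-- The negation `∼` on `3`: `∼0 = 1`, `∼1 = 0`, `∼⊥ = ⊥`. -/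
def triNeg : Tri → Tri
  | .zero => .one
  | .one => .zero
  | .bot => .bot

/-- SAC conjunction: `x` if `y = ⊥`, `y` if `x = ⊥`, classical otherwise. -/
def sacAnd (x y : Tri) : Tri :=
  match x, y with
  | x, .bot => x
  | .bot, y => y
  | .one, .one => .one
  | _, _ => .zero

/-- SAC disjunction: `x` if `y = ⊥`, `y` if `x = ⊥`, classical otherwise. -/
def sacOr (x y : Tri) : Tri :=
  match x, y with
  | x, .bot => x
  | .bot, y => y
  | .zero, .zero => .zero
  | _, _ => .one

/-- The derived SAC connective
`x ⊓ y = (x ∨ (y ∧ (x ∨ ∼y))) ∧ (y ∨ (x ∧ (y ∨ ∼x)))`. -/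
def sqcap (x y : Tri) : Tri :=
  sacAnd (sacOr x (sacAnd y (sacOr x (triNeg y))))
    (sacOr y (sacAnd x (sacOr y (triNeg x))))

/-- The truth table of `⊓`: `x ⊓ y = 1` iff `x = y = 1`;
`x ⊓ y = ⊥` iff `x = y = ⊥`; and `x ⊓ y = 0` in all other cases. -/
theorem sqcap_truth_table (x y : Tri) :
    (sqcap x y = Tri.one ↔ x = Tri.one ∧ y = Tri.one) ∧
      (sqcap x y = Tri.bot ↔ x = Tri.bot ∧ y = Tri.bot) ∧
      (¬(x = Tri.one ∧ y = Tri.one) → ¬(x = Tri.bot ∧ y = Tri.bot) →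
        sqcap x y = Tri.zero) := by
  cases x <;> cases y <;> simp [sqcap, sacAnd, sacOr, triNeg]
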